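/- arXiv:2504.12582 — 2 statements merged into one kernel-verified Lean document; each statement's English description precedes it below -/
import Mathlib

section
/- (Theorem 2, mask-conditional bound, abstract form.) Let n ≥ 1, α ∈ (0,1), and let R = (R_1,…,R_{n+1}) be a random vector with values in ℝ^{n+1}. Let w_1 ≤ ⋯ ≤ w_{n+1} be nonnegative nondecreasing weights, not all zero, with normalized weights w̃_i = w_i / Σ_j w_j. Suppose J ⊆ {1,…,n} is a set of indices such that for every i ∈ J, the law of R^i (R with entries i and n+1 swapped) equals the law of R. Then ℙ{ R_{n+1} ≤ Q_{1−α}( Σ_{i=1}^{n} w̃_i·δ_{R_i} + w̃_{n+1}·δ_{+∞} ) } ≥ 1 − α − Σ_{i ∈ {1,…,n} \ J} w̃_i · d_TV( law(R), law(R^i) ). -/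
open MeasureTheory ProbabilityTheory Finset
open scoped Classical

/-- The level `(1-α)` quantile of the finitely supported distribution
`∑ i, p i · δ_{a i}` on `ℝ ∪ {+∞}` (encoded via `EReal`):
`Q_{1-α}(P) = inf { z : ∑_{i : a i ≤ z} p i ≥ 1 - α }`. -/
noncomputable def wQuantile {k : ℕ} (α : ℝ) (p : Fin k → ℝ) (a : Fin k → EReal) : EReal :=
  sInf {z : EReal | 1 - α ≤ ∑ i ∈ Finset.univ.filter (fun i => a i ≤ z), p i}

/-- Total variation distance between two measures:
`d_TV(μ, ν) = sup_{A measurable} |μ(A) - ν(A)|`. -/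
noncomputable def tvDist {X : Type*} [MeasurableSpace X] (μ ν : Measure X) : ℝ :=
  sSup {r : ℝ | ∃ A : Set X, MeasurableSet A ∧ r = |(μ A).toReal - (ν A).toReal|}

lemma wQuantile_lt_iff {k : ℕ} {α : ℝ} (hα1 : α < 1) {p : Fin k → ℝ} (hp : ∀ i, 0 ≤ p i)
    (a : Fin k → EReal) (x : ℝ) :
    wQuantile α p a < (x : EReal) ↔
      1 - α ≤ ∑ i ∈ Finset.univ.filter (fun i => a i < (x : EReal)), p i := by
  unfold wQuantile
  rw [sInf_lt_iff]
  constructor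
  · rintro ⟨z, hz, hzx⟩
    refine le_trans hz (Finset.sum_le_sum_of_subset_of_nonneg ?_ ?_)
    · intro j hj
      simp only [Finset.mem_filter, Finset.mem_univ, true_and] at *
      exact lt_of_le_of_lt hj hzx
    · intros; exact hp _
  · intro h
    set T := Finset.univ.filter (fun i => a i < (x : EReal)) with hT
    have hTne : T.Nonempty := by
      by_contra hne
      rw [Finset.not_nonempty_iff_eq_empty] at hne
      rw [hne] at h
      simp at h
      linarith
    set z := (T.image a).max' (hTne.image a) with hz
    have hzlt : z < (x : EReal) := by
      obtain ⟨j, hj, hja⟩ := Finset.mem_image.mp ((T.image a).max'_mem (hTne.image a))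
      rw [hz, ← hja]
      exact (Finset.mem_filter.mp hj).2
    refine ⟨z, ?_, hzlt⟩
    show 1 - α ≤ ∑ i ∈ Finset.univ.filter (fun i => a i ≤ z), p i
    refine le_trans h (Finset.sum_le_sum_of_subset_of_nonneg ?_ ?_)
    · intro j hj
      simp only [Finset.mem_filter, Finset.mem_univ, true_and] at *
      exact Finset.le_max' _ _ (Finset.mem_image_of_mem a hj)
    · intros; exact hp _

def strange {n : ℕ} (α : ℝ) (p : Fin (n + 1) → ℝ) (r : Fin (n + 1) → ℝ) (i : Fin (n + 1)) :
    Prop :=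
  1 - α ≤ ∑ k ∈ Finset.univ.filter (fun k => k ≠ i ∧ r k < r i),
      p (Equiv.swap i (Fin.last n) k)

lemma measurableSet_strange {n : ℕ} (α : ℝ) (p : Fin (n + 1) → ℝ) (i : Fin (n + 1)) :
    MeasurableSet {r : Fin (n + 1) → ℝ | strange α p r i} := by
  have hset : {r : Fin (n + 1) → ℝ | strange α p r i} =
      {r : Fin (n + 1) → ℝ | 1 - α ≤ ∑ k : Fin (n + 1),
        if k ≠ i ∧ r k < r i then p (Equiv.swap i (Fin.last n) k) else 0} := by
    ext r
    simp [strange, Finset.sum_filter]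
  rw [hset]
  apply measurableSet_le measurable_const
  apply Finset.measurable_sum
  intro k _
  by_cases hk : k = i
  · subst hk
    simp only [ne_eq, not_true_eq_false, false_and, if_false]
    exact measurable_const
  · have heq : (fun r : Fin (n + 1) → ℝ =>
        if k ≠ i ∧ r k < r i then p (Equiv.swap i (Fin.last n) k) else 0)
        = fun r => if r k < r i then p (Equiv.swap i (Fin.last n) k) else 0 := by
      funext r; simp [hk]
    rw [heq]
    exact Measurable.ite (measurableSet_lt (measurable_pi_apply k) (measurable_pi_apply i))
      measurable_const measurable_const

lemma strange_swap {n : ℕ} (α : ℝ) (p : Fin (n + 1) → ℝ) (r : Fin (n + 1) → ℝ)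
    (i : Fin (n + 1)) :
    strange α p (r ∘ Equiv.swap i (Fin.last n)) (Fin.last n) ↔ strange α p r i := by
  unfold strange
  have hsum : ∑ k ∈ Finset.univ.filter (fun k => k ≠ Fin.last n ∧
        (r ∘ Equiv.swap i (Fin.last n)) k < (r ∘ Equiv.swap i (Fin.last n)) (Fin.last n)),
        p (Equiv.swap (Fin.last n) (Fin.last n) k)
      = ∑ k ∈ Finset.univ.filter (fun k => k ≠ i ∧ r k < r i),
        p (Equiv.swap i (Fin.last n) k) := by
    refine (Finset.sum_equiv (Equiv.swap i (Fin.last n)) ?_ ?_).symm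
    · intro j
      simp only [Finset.mem_filter, Finset.mem_univ, true_and, Function.comp_apply,
        Equiv.swap_apply_self, Equiv.swap_apply_right]
      constructor
      · rintro ⟨hj1, hj2⟩
        refine ⟨?_, hj2⟩
        intro hcon
        apply hj1
        rwa [Equiv.apply_eq_iff_eq_symm_apply, Equiv.symm_swap, Equiv.swap_apply_right] at hcon
      · rintro ⟨hj1, hj2⟩
        refine ⟨?_, hj2⟩
        intro hcon
        subst hcon
        exact hj1 (Equiv.swap_apply_left _ _)
    · intro j _
      simp [Equiv.swap_self]
  rw [hsum]

lemma strange_sum_le {n : ℕ} {α : ℝ} (hα : 0 < α) {p : Fin (n + 1) → ℝ}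
    (hp : ∀ i, 0 ≤ p i) (hsum : ∑ i, p i = 1) (hplast : ∀ i, p i ≤ p (Fin.last n))
    (r : Fin (n + 1) → ℝ) :
    ∑ i ∈ Finset.univ.filter (fun i => strange α p r i), p i ≤ α := by
  set S := Finset.univ.filter (fun i => strange α p r i) with hS
  rcases S.eq_empty_or_nonempty with h | h
  · rw [h]; simpa using hα.le
  · obtain ⟨i0, hi0S, hi0min⟩ := S.exists_min_image r h
    set σ := Equiv.swap i0 (Fin.last n) with hσ
    set K := Finset.univ.filter (fun k => r i0 ≤ r k) with hK
    have hi0K : i0 ∈ K := by simp [hK]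
    have hstr : strange α p r i0 := by
      have := Finset.mem_filter.mp hi0S
      exact this.2
    have hKσ : ∑ k ∈ K, p (σ k) ≤ α := by
      have hcompl : Finset.univ.filter (fun k => ¬(k ≠ i0 ∧ r k < r i0)) = K := by
        rw [hK]
        apply Finset.filter_congr
        intro k _
        constructor
        · intro h'
          by_cases hk : k = i0
          · subst hk; exact le_rfl
          · push_neg at h'
            exact h' hk
        · intro h' hcon
          exact absurd h' (not_le.mpr hcon.2)
      have htot : ∑ k ∈ Finset.univ.filter (fun k => k ≠ i0 ∧ r k < r i0), p (σ k)
          + ∑ k ∈ Finset.univ.filter (fun k => ¬(k ≠ i0 ∧ r k < r i0)), p (σ k) = 1 := by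
        rw [Finset.sum_filter_add_sum_filter_not]
        rw [Equiv.sum_comp σ p]
        exact hsum
      have h1 : 1 - α ≤ ∑ k ∈ Finset.univ.filter (fun k => k ≠ i0 ∧ r k < r i0), p (σ k) := hstr
      rw [hcompl] at htot
      linarith
    have hK2 : ∑ k ∈ K, p k ≤ ∑ k ∈ K, p (σ k) := by
      by_cases hl : Fin.last n ∈ K
      · have heq : ∑ k ∈ K, p (σ k) = ∑ k ∈ K, p k := by
          refine Finset.sum_equiv σ ?_ ?_
          · intro k
            by_cases h1 : k = i0
            · subst h1
              simp only [hσ, Equiv.swap_apply_left]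
              exact ⟨fun _ => hl, fun _ => hi0K⟩
            · by_cases h2 : k = Fin.last n
              · subst h2
                simp only [hσ, Equiv.swap_apply_right]
                exact ⟨fun _ => hi0K, fun _ => hl⟩
              · rw [hσ, Equiv.swap_apply_of_ne_of_ne h1 h2]
          · intro k _; rfl
        linarith
      · have hi0ne : i0 ≠ Fin.last n := fun h' => hl (h' ▸ hi0K)
        rw [← Finset.add_sum_erase K p hi0K, ← Finset.add_sum_erase K (fun k => p (σ k)) hi0K]
        have herase : ∑ k ∈ K.erase i0, p (σ k) = ∑ k ∈ K.erase i0, p k := by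
          apply Finset.sum_congr rfl
          intro k hk
          have hk1 : k ≠ i0 := Finset.ne_of_mem_erase hk
          have hk2 : k ≠ Fin.last n := fun h' => hl (h' ▸ Finset.mem_of_mem_erase hk)
          rw [hσ, Equiv.swap_apply_of_ne_of_ne hk1 hk2]
        rw [herase]
        have hlast : p i0 ≤ p (σ i0) := by
          rw [hσ, Equiv.swap_apply_left]; exact hplast i0
        linarith
    have hSK : S ⊆ K := by
      intro j hj
      simp only [hK, Finset.mem_filter, Finset.mem_univ, true_and]
      exact hi0min j hj
    calc ∑ i ∈ S, p i ≤ ∑ i ∈ K, p i :=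
          Finset.sum_le_sum_of_subset_of_nonneg hSK (fun i _ _ => hp i)
      _ ≤ ∑ k ∈ K, p (σ k) := hK2
      _ ≤ α := hKσ

lemma strange_iff_quantile {n : ℕ} {α : ℝ} (hα1 : α < 1) {p : Fin (n + 1) → ℝ}
    (hp : ∀ i, 0 ≤ p i) (r : Fin (n + 1) → ℝ) :
    ((r (Fin.last n) : EReal) ≤
        wQuantile α p (fun i => if i = Fin.last n then (⊤ : EReal) else (r i : EReal)))
      ↔ ¬ strange α p r (Fin.last n) := by
  rw [← not_lt, wQuantile_lt_iff hα1 hp]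
  apply not_congr
  unfold strange
  have hfilter : Finset.univ.filter (fun i : Fin (n + 1) =>
      (if i = Fin.last n then (⊤ : EReal) else (r i : EReal)) < (r (Fin.last n) : EReal))
      = Finset.univ.filter (fun k => k ≠ Fin.last n ∧ r k < r (Fin.last n)) := by
    apply Finset.filter_congr
    intro k _
    by_cases hk : k = Fin.last n
    · simp [hk]
    · simp [hk, EReal.coe_lt_coe_iff]
  rw [hfilter]
  constructor
  · intro h
    refine le_trans h (le_of_eq (Finset.sum_congr rfl ?_))
    intro k hk
    rw [Equiv.swap_self]
    rfl
  · intro h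
    refine le_trans h (le_of_eq (Finset.sum_congr rfl ?_))
    intro k hk
    rw [Equiv.swap_self]
    rfl

/-- Theorem 2 (mask-conditional bound, abstract form): if swapping every index `i ∈ J`
with the test index `n+1` leaves the law of `R` unchanged, then only indices outside `J`
contribute a total-variation penalty to the coverage of weighted nonexchangeable
conformal prediction. -/
theorem weighted_conformal_mask_conditional_bound {Ω : Type*} [MeasureSpace Ω]
    [IsProbabilityMeasure (ℙ : Measure Ω)]
    (n : ℕ) (hn : 1 ≤ n) (α : ℝ) (hα : 0 < α) (hα1 : α < 1)
    (R : Ω → Fin (n + 1) → ℝ) (hR : Measurable R)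
    (w : Fin (n + 1) → ℝ) (hw0 : ∀ i, 0 ≤ w i) (hwmono : Monotone w)
    (hwne : ∃ i, w i ≠ 0)
    (J : Finset (Fin (n + 1))) (hJlast : Fin.last n ∉ J)
    (hJ : ∀ i ∈ J,
      Measure.map (fun ω => R ω ∘ Equiv.swap i (Fin.last n)) ℙ = Measure.map R ℙ) :
    ENNReal.ofReal (1 - α - ∑ i ∈ (Finset.univ.filter (fun i : Fin (n + 1) =>
          i ≠ Fin.last n)) \ J,
        (w i / ∑ j, w j) *
          tvDist (Measure.map R ℙ)
            (Measure.map (fun ω => R ω ∘ Equiv.swap i (Fin.last n)) ℙ))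
      ≤ ℙ {ω | (R ω (Fin.last n) : EReal) ≤
          wQuantile α (fun i => w i / ∑ j, w j)
            (fun i => if i = Fin.last n then (⊤ : EReal) else (R ω i : EReal))} := by
  -- normalized weights
  obtain ⟨i₁, hi₁⟩ := hwne
  have hWpos : 0 < ∑ j, w j :=
    Finset.sum_pos' (fun i _ => hw0 i) ⟨i₁, Finset.mem_univ _, (hw0 i₁).lt_of_ne (Ne.symm hi₁)⟩
  set p : Fin (n + 1) → ℝ := fun i => w i / ∑ j, w j with hpdef
  have hp : ∀ i, 0 ≤ p i := fun i => div_nonneg (hw0 i) hWpos.le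
  have hpsum : ∑ i, p i = 1 := by
    rw [hpdef, ← Finset.sum_div, div_self hWpos.ne']
  have hplast : ∀ i, p i ≤ p (Fin.last n) := by
    intro i
    have := hwmono (Fin.le_last i)
    exact div_le_div_of_nonneg_right this hWpos.le
  -- strange sets and events
  set A : Fin (n + 1) → Set (Fin (n + 1) → ℝ) := fun i => {r | strange α p r i} with hAdef
  set E : Fin (n + 1) → Set Ω := fun i => R ⁻¹' (A i) with hEdef
  have hA : ∀ i, MeasurableSet (A i) := fun i => measurableSet_strange α p i
  have hE : ∀ i, MeasurableSet (E i) := fun i => hR (hA i)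
  have hRi : ∀ i : Fin (n + 1), Measurable (fun ω => R ω ∘ Equiv.swap i (Fin.last n)) :=
    fun i => measurable_pi_lambda _ (fun j => (measurable_pi_apply _).comp hR)
  have hmu : Measure.map R ℙ (A (Fin.last n)) = ℙ (E (Fin.last n)) :=
    Measure.map_apply hR (hA _)
  have hmui : ∀ i : Fin (n + 1),
      Measure.map (fun ω => R ω ∘ Equiv.swap i (Fin.last n)) ℙ (A (Fin.last n)) = ℙ (E i) := by
    intro i
    rw [Measure.map_apply (hRi i) (hA _)]
    congr 1
    ext ω
    simp only [Set.mem_preimage, hEdef, hAdef, Set.mem_setOf_eq]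
    exact strange_swap α p (R ω) i
  -- the key expectation bound
  have hkey : ∑ i, p i * (ℙ (E i)).toReal ≤ α := by
    have hint : ∀ i : Fin (n + 1), Integrable ((E i).indicator (fun _ => p i)) ℙ :=
      fun i => (integrable_const (p i)).indicator (hE i)
    have h1 : ∑ i, p i * (ℙ (E i)).toReal
        = ∫ ω, ∑ i, (E i).indicator (fun _ => p i) ω ∂ℙ := by
      rw [integral_finset_sum _ (fun i _ => hint i)]
      refine Finset.sum_congr rfl (fun i _ => ?_)
      rw [integral_indicator_const (p i) (hE i), smul_eq_mul, mul_comm]; rfl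
    rw [h1]
    have h2 : ∫ ω, ∑ i, (E i).indicator (fun _ => p i) ω ∂ℙ ≤ ∫ _ω : Ω, α ∂ℙ := by
      apply integral_mono (integrable_finset_sum _ (fun i _ => hint i)) (integrable_const α)
      intro ω
      show (∑ i, (E i).indicator (fun _ => p i) ω) ≤ α
      have hpt : ∑ i, (E i).indicator (fun _ => p i) ω
          = ∑ i ∈ Finset.univ.filter (fun i => strange α p (R ω) i), p i := by
        rw [Finset.sum_filter]
        refine Finset.sum_congr rfl (fun i _ => ?_)
        rw [Set.indicator_apply]
        by_cases h : strange α p (R ω) i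
        · simp [hEdef, hAdef, Set.mem_preimage, Set.mem_setOf_eq, h]
        · simp [hEdef, hAdef, Set.mem_preimage, Set.mem_setOf_eq, h]
      rw [hpt]
      exact strange_sum_le hα hp hpsum hplast (R ω)
    refine h2.trans ?_
    rw [integral_const]
    simp
  -- total variation bound
  have htv : ∀ i : Fin (n + 1),
      (ℙ (E (Fin.last n))).toReal - (ℙ (E i)).toReal ≤
        tvDist (Measure.map R ℙ)
          (Measure.map (fun ω => R ω ∘ Equiv.swap i (Fin.last n)) ℙ) := by
    intro i
    have hPM1 : IsProbabilityMeasure (Measure.map R ℙ) :=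
      Measure.isProbabilityMeasure_map hR.aemeasurable
    have hPM2 : IsProbabilityMeasure
        (Measure.map (fun ω => R ω ∘ Equiv.swap i (Fin.last n)) ℙ) :=
      Measure.isProbabilityMeasure_map (hRi i).aemeasurable
    have hbdd : BddAbove {r : ℝ | ∃ B : Set (Fin (n + 1) → ℝ), MeasurableSet B ∧
        r = |(Measure.map R ℙ B).toReal -
          (Measure.map (fun ω => R ω ∘ Equiv.swap i (Fin.last n)) ℙ B).toReal|} := by
      refine ⟨1, ?_⟩
      rintro x ⟨B, hB, rfl⟩
      have h1 : (Measure.map R ℙ B).toReal ≤ 1 := by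
        simpa using ENNReal.toReal_mono ENNReal.one_ne_top
          (prob_le_one (μ := Measure.map R ℙ) (s := B))
      have h2 : (Measure.map (fun ω => R ω ∘ Equiv.swap i (Fin.last n)) ℙ B).toReal ≤ 1 := by
        simpa using ENNReal.toReal_mono ENNReal.one_ne_top
          (prob_le_one (μ := Measure.map (fun ω => R ω ∘ Equiv.swap i (Fin.last n)) ℙ) (s := B))
      rw [abs_sub_le_iff]
      constructor <;> nlinarith [ENNReal.toReal_nonneg (a := Measure.map R ℙ B),
        ENNReal.toReal_nonneg
          (a := Measure.map (fun ω => R ω ∘ Equiv.swap i (Fin.last n)) ℙ B)]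
    have hmem : |(Measure.map R ℙ (A (Fin.last n))).toReal -
        (Measure.map (fun ω => R ω ∘ Equiv.swap i (Fin.last n)) ℙ (A (Fin.last n))).toReal|
        ∈ {r : ℝ | ∃ B : Set (Fin (n + 1) → ℝ), MeasurableSet B ∧
          r = |(Measure.map R ℙ B).toReal -
            (Measure.map (fun ω => R ω ∘ Equiv.swap i (Fin.last n)) ℙ B).toReal|} :=
      ⟨A (Fin.last n), hA _, rfl⟩
    have hsup := le_csSup hbdd hmem
    rw [hmu, hmui i] at hsup
    exact le_trans (le_abs_self _) hsup
  have hJeq : ∀ i ∈ J, ℙ (E i) = ℙ (E (Fin.last n)) := by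
    intro i hi
    rw [← hmui i, hJ i hi, hmu]
  -- combine
  set D : Finset (Fin (n + 1)) :=
    (Finset.univ.filter (fun i : Fin (n + 1) => i ≠ Fin.last n)) \ J with hDdef
  set x : ℝ := (ℙ (E (Fin.last n))).toReal with hxdef
  set pen : ℝ := ∑ i ∈ D, p i * tvDist (Measure.map R ℙ)
      (Measure.map (fun ω => R ω ∘ Equiv.swap i (Fin.last n)) ℙ) with hpendef
  have hxbound : x ≤ α + pen := by
    have hterm : ∀ i ∈ Finset.univ, p i * x ≤ p i * (ℙ (E i)).toReal +
        (if i ∈ D then p i * tvDist (Measure.map R ℙ)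
          (Measure.map (fun ω => R ω ∘ Equiv.swap i (Fin.last n)) ℙ) else 0) := by
      intro i _
      by_cases hiD : i ∈ D
      · rw [if_pos hiD]
        have h1 := htv i
        nlinarith [hp i, mul_le_mul_of_nonneg_left
          (show x ≤ (ℙ (E i)).toReal + tvDist (Measure.map R ℙ)
            (Measure.map (fun ω => R ω ∘ Equiv.swap i (Fin.last n)) ℙ) by linarith) (hp i)]
      · rw [if_neg hiD]
        have hxi : ℙ (E i) = ℙ (E (Fin.last n)) := by
          by_cases hil : i = Fin.last n
          · rw [hil]
          · refine hJeq i ?_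
            by_contra hiJ
            exact hiD (Finset.mem_sdiff.mpr ⟨Finset.mem_filter.mpr ⟨Finset.mem_univ _, hil⟩, hiJ⟩)
        rw [hxi, ← hxdef, add_zero]
    calc x = ∑ i, p i * x := by rw [← Finset.sum_mul, hpsum, one_mul]
      _ ≤ ∑ i, (p i * (ℙ (E i)).toReal +
          (if i ∈ D then p i * tvDist (Measure.map R ℙ)
            (Measure.map (fun ω => R ω ∘ Equiv.swap i (Fin.last n)) ℙ) else 0)) :=
        Finset.sum_le_sum hterm
      _ = ∑ i, p i * (ℙ (E i)).toReal + pen := by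
        rw [Finset.sum_add_distrib, hpendef, Finset.sum_ite_mem, Finset.univ_inter]
      _ ≤ α + pen := add_le_add_left hkey pen
  -- identify the goal event
  have hgoal : {ω | (R ω (Fin.last n) : EReal) ≤
      wQuantile α p (fun i => if i = Fin.last n then (⊤ : EReal) else (R ω i : EReal))}
      = (E (Fin.last n))ᶜ := by
    ext ω
    rw [Set.mem_setOf_eq, strange_iff_quantile hα1 hp (R ω)]
    simp [hEdef, hAdef, Set.mem_preimage, Set.mem_setOf_eq]
  show ENNReal.ofReal (1 - α - pen) ≤ ℙ {ω | (R ω (Fin.last n) : EReal) ≤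
      wQuantile α p (fun i => if i = Fin.last n then (⊤ : EReal) else (R ω i : EReal))}
  rw [hgoal, prob_compl_eq_one_sub (hE (Fin.last n))]
  have hPE : ℙ (E (Fin.last n)) = ENNReal.ofReal x :=
    (ENNReal.ofReal_toReal (measure_ne_top _ _)).symm
  rw [hPE, ← ENNReal.ofReal_one, ← ENNReal.ofReal_sub _ ENNReal.toReal_nonneg]
  exact ENNReal.ofReal_le_ofReal (by linarith)
end

section
/- Let X be a real random variable with law the Gaussian measure N(μ, σ²) with σ > 0, let τ ∈ ℝ, and set ξ = (τ − μ)/σ. Then the conditional variance of X given the event {X < τ} (i.e., the variance of X under the conditional probability measure ℙ(· | X < τ)) equals σ²·( 1 − ξ·φ(ξ)/Φ(ξ) − ( φ(ξ)/Φ(ξ) )² ). -/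
open MeasureTheory ProbabilityTheory

/-- Probability density function of the standard normal distribution. -/
noncomputable def stdNormalPDF (x : ℝ) : ℝ :=
  Real.exp (-x ^ 2 / 2) / Real.sqrt (2 * Real.pi)

/-- Cumulative distribution function of the standard normal distribution. -/
noncomputable def stdNormalCDF (x : ℝ) : ℝ :=
  ((gaussianReal 0 1) (Set.Iic x)).toReal

open Real Set Filter Topology

lemma pdf_eq : stdNormalPDF = gaussianPDFReal 0 1 := by
  funext x
  simp [stdNormalPDF, gaussianPDFReal, div_eq_inv_mul, mul_comm]

lemma pdf_pos (x : ℝ) : 0 < stdNormalPDF x :=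
  div_pos (Real.exp_pos _) (Real.sqrt_pos.2 (by positivity))

lemma pdf_form : stdNormalPDF = fun x => (Real.sqrt (2*Real.pi))⁻¹ * Real.exp (-(1/2 : ℝ) * x ^ 2) := by
  funext x
  rw [stdNormalPDF, div_eq_inv_mul]; ring_nf

lemma integrable_pdf : Integrable stdNormalPDF := by
  rw [pdf_form]
  exact (integrable_exp_neg_mul_sq (by norm_num : (0:ℝ) < 1/2)).const_mul _

lemma integrable_id_pdf : Integrable (fun x => x * stdNormalPDF x) := by
  rw [pdf_form]
  refine (((integrable_mul_exp_neg_mul_sq (by norm_num : (0:ℝ) < 1/2)).const_mul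
    (Real.sqrt (2*Real.pi))⁻¹).congr ?_)
  exact ae_of_all _ fun x => by ring

lemma integrable_sq_pdf : Integrable (fun x => x ^ 2 * stdNormalPDF x) := by
  rw [pdf_form]
  have h2 : Integrable (fun x : ℝ => x ^ 2 * Real.exp (-(1/2 : ℝ) * x ^ 2)) := by
    have := integrable_rpow_mul_exp_neg_mul_sq (by norm_num : (0:ℝ) < 1/2) (s := 2) (by norm_num)
    refine this.congr (ae_of_all _ fun x => ?_)
    simp [Real.rpow_natCast]
  refine ((h2.const_mul (Real.sqrt (2*Real.pi))⁻¹).congr ?_)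
  exact ae_of_all _ fun x => by ring

lemma hasDerivAt_negpdf (x : ℝ) :
    HasDerivAt (fun y => -stdNormalPDF y) (x * stdNormalPDF x) x := by
  have hinner : HasDerivAt (fun y : ℝ => -(1/2 : ℝ) * y ^ 2) (-(1/2 : ℝ) * (2 * x)) x := by
    simpa using (hasDerivAt_pow 2 x).const_mul (-(1/2 : ℝ))
  have hexp := hinner.exp
  have h := (hexp.const_mul (Real.sqrt (2*Real.pi))⁻¹).neg
  have e : (fun y => -stdNormalPDF y)
      = -fun y => (Real.sqrt (2*Real.pi))⁻¹ * Real.exp (-(1/2 : ℝ) * y ^ 2) := by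
    funext y; simp only [pdf_form, Pi.neg_apply]
  rw [e]
  exact h.congr_deriv (by rw [pdf_form]; ring)

lemma hasDerivAt_pdf (x : ℝ) :
    HasDerivAt stdNormalPDF (-(x * stdNormalPDF x)) x := by
  exact (hasDerivAt_negpdf x).neg.congr_of_eventuallyEq
    (Filter.Eventually.of_forall fun y => by simp)

lemma tendsto_sq_atBot : Tendsto (fun x : ℝ => x ^ 2) atBot atTop := by
  have h1 : Tendsto (fun x : ℝ => x ^ 2) atTop atTop := tendsto_pow_atTop (by norm_num)
  have h2 : Tendsto (fun x : ℝ => -x) atBot atTop := tendsto_neg_atBot_atTop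
  exact (h1.comp h2).congr fun x => by simp

lemma tendsto_pdf_atBot : Tendsto stdNormalPDF atBot (𝓝 0) := by
  rw [pdf_form]
  have h2 : Tendsto (fun x : ℝ => Real.exp (-(1/2 : ℝ) * x ^ 2)) atBot (𝓝 0) :=
    Real.tendsto_exp_atBot.comp
      (tendsto_sq_atBot.const_mul_atTop_of_neg (by norm_num : (-(1/2):ℝ) < 0))
  simpa using h2.const_mul (Real.sqrt (2*Real.pi))⁻¹

lemma tendsto_id_pdf_atTop : Tendsto (fun x => x * stdNormalPDF x) atTop (𝓝 0) := by
  have hlo := rpow_mul_exp_neg_mul_sq_isLittleO_exp_neg (by norm_num : (0:ℝ) < 1/2) 1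
  have hexp : Tendsto (fun x : ℝ => Real.exp (-(1/2) * x)) atTop (𝓝 0) :=
    Real.tendsto_exp_atBot.comp
      ((tendsto_id (α := ℝ)).const_mul_atTop_of_neg (by norm_num : (-(1/2):ℝ) < 0))
  have h0 : Tendsto (fun x : ℝ => x ^ (1:ℝ) * Real.exp (-(1/2) * x ^ 2)) atTop (𝓝 0) :=
    hlo.tendsto_zero_of_tendsto hexp
  rw [pdf_form]
  have := h0.const_mul ((Real.sqrt (2*Real.pi))⁻¹)
  rw [mul_zero] at this
  refine this.congr fun x => ?_
  rw [Real.rpow_one]; ring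

lemma pdf_even (x : ℝ) : stdNormalPDF (-x) = stdNormalPDF x := by
  simp [stdNormalPDF, neg_sq]

lemma tendsto_id_pdf_atBot : Tendsto (fun x => x * stdNormalPDF x) atBot (𝓝 0) := by
  have h := (tendsto_id_pdf_atTop.comp tendsto_neg_atBot_atTop).neg
  rw [neg_zero] at h
  refine h.congr fun x => ?_
  simp [Function.comp, pdf_even]

lemma integral_id_pdf_Iic (a : ℝ) :
    ∫ x in Iic a, x * stdNormalPDF x = -stdNormalPDF a := by
  have ht : Tendsto (fun y => -stdNormalPDF y) atBot (𝓝 0) := by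
    simpa using tendsto_pdf_atBot.neg
  have := integral_Iic_of_hasDerivAt_of_tendsto' (a := a) (fun x _ => hasDerivAt_negpdf x)
    integrable_id_pdf.integrableOn ht
  simpa using this

lemma integral_sq_pdf_Iic (a : ℝ) :
    ∫ x in Iic a, x ^ 2 * stdNormalPDF x = (∫ x in Iic a, stdNormalPDF x) - a * stdNormalPDF a := by
  have hder : ∀ x ∈ Iic a, HasDerivAt (fun y => -(y * stdNormalPDF y))
      (x ^ 2 * stdNormalPDF x - stdNormalPDF x) x := by
    intro x _
    have h := ((hasDerivAt_id x).mul (hasDerivAt_pdf x)).neg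
    exact h.congr_deriv (by simp only [id_eq, id]; ring)
  have ht : Tendsto (fun y => -(y * stdNormalPDF y)) atBot (𝓝 0) := by
    simpa using tendsto_id_pdf_atBot.neg
  have hint : IntegrableOn (fun x => x ^ 2 * stdNormalPDF x - stdNormalPDF x) (Iic a) :=
    (integrable_sq_pdf.sub integrable_pdf).integrableOn
  have h := integral_Iic_of_hasDerivAt_of_tendsto' hder hint ht
  rw [integral_sub integrable_sq_pdf.integrableOn integrable_pdf.integrableOn] at h
  simp only [sub_zero] at h
  linarith

lemma cdf_eq (a : ℝ) : stdNormalCDF a = ∫ x in Iic a, stdNormalPDF x := by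
  rw [stdNormalCDF, gaussianReal_apply_eq_integral 0 one_ne_zero, ← pdf_eq,
    ENNReal.toReal_ofReal (integral_nonneg fun x => (pdf_pos x).le)]

lemma gaussian01_Iic_ne_zero (a : ℝ) : gaussianReal 0 1 (Iic a) ≠ 0 := by
  rw [gaussianReal_of_var_ne_zero 0 one_ne_zero, ne_eq,
    withDensity_apply_eq_zero (measurable_gaussianPDF 0 1)]
  have : {x | gaussianPDF 0 1 x ≠ 0} = univ := by
    ext x; simp [(gaussianPDF_pos 0 one_ne_zero x).ne']
  rw [this, univ_inter]
  simp [Real.volume_Iic]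

lemma cdf_pos (a : ℝ) : 0 < stdNormalCDF a :=
  ENNReal.toReal_pos (gaussian01_Iic_ne_zero a) (measure_ne_top _ _)

lemma map_affine (σ μ' : ℝ) (hσ : 0 < σ) :
    Measure.map (fun z => σ * z + μ') (gaussianReal 0 1)
      = gaussianReal μ' (Real.toNNReal (σ ^ 2)) := by
  have h1 : Measure.map (fun z : ℝ => σ * z) (gaussianReal 0 1)
      = gaussianReal (σ * 0) (⟨σ ^ 2, sq_nonneg _⟩ * 1) := gaussianReal_map_const_mul σ
  have hcomp : (fun z : ℝ => σ * z + μ') = (fun y : ℝ => y + μ') ∘ (fun z : ℝ => σ * z) := rfl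
  rw [hcomp, ← Measure.map_map (measurable_add_const μ') (measurable_const_mul σ), h1,
    gaussianReal_map_add_const μ']
  have h2 : (⟨σ ^ 2, sq_nonneg _⟩ : NNReal) * 1 = Real.toNNReal (σ ^ 2) := by
    ext
    simp [Real.coe_toNNReal _ (sq_nonneg σ)]
  rw [mul_zero, zero_add]; exact congrArg _ h2

lemma setIntegral_g01 (g : ℝ → ℝ) {s : Set ℝ} (hs : MeasurableSet s) :
    ∫ z in s, g z ∂(gaussianReal 0 1) = ∫ z in s, g z * stdNormalPDF z := by
  rw [gaussianReal_of_var_ne_zero 0 one_ne_zero, restrict_withDensity hs]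
  have hm : Measurable (fun x => (gaussianPDFReal 0 1 x).toNNReal) :=
    (measurable_gaussianPDFReal 0 1).real_toNNReal
  have hpdf : gaussianPDF 0 1 = fun x => ((gaussianPDFReal 0 1 x).toNNReal : ENNReal) := by
    funext x
    rw [gaussianPDF_def]
    rfl
  rw [hpdf, integral_withDensity_eq_integral_smul hm]
  refine integral_congr_ae (ae_of_all _ fun z => ?_)
  simp only [← pdf_eq, NNReal.smul_def, Real.coe_toNNReal _ (pdf_pos z).le, smul_eq_mul]
  ring

lemma integrable_g01_restrict {g : ℝ → ℝ} {s : Set ℝ} (hs : MeasurableSet s)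
    (hg : Integrable (fun z => g z * stdNormalPDF z)) :
    Integrable g ((gaussianReal 0 1).restrict s) := by
  rw [gaussianReal_of_var_ne_zero 0 one_ne_zero, restrict_withDensity hs,
    integrable_withDensity_iff (measurable_gaussianPDF 0 1)
      (ae_of_all _ fun x => by rw [gaussianPDF_def]; exact ENNReal.ofReal_lt_top)]
  refine hg.integrableOn.congr (ae_of_all _ fun x => ?_)
  simp only [gaussianPDF_def, ← pdf_eq, ENNReal.toReal_ofReal (pdf_pos x).le]

/-- Variance of a Gaussian `N(μ, σ²)` random variable conditional on it being below `τ`: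
`Var[X ∣ X < τ] = σ²·(1 - ξ·φ(ξ)/Φ(ξ) - (φ(ξ)/Φ(ξ))²)` with `ξ = (τ - μ)/σ`. -/
theorem truncated_gaussian_variance_below {Ω : Type*} [MeasureSpace Ω]
    [IsProbabilityMeasure (ℙ : Measure Ω)]
    (X : Ω → ℝ) (hX : Measurable X) (μ σ τ : ℝ) (hσ : 0 < σ)
    (hlaw : Measure.map X ℙ = gaussianReal μ (Real.toNNReal (σ ^ 2))) :
    variance X (ℙ[|{ω | X ω < τ}]) =
      σ ^ 2 * (1 - ((τ - μ) / σ) * stdNormalPDF ((τ - μ) / σ) / stdNormalCDF ((τ - μ) / σ)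
        - (stdNormalPDF ((τ - μ) / σ) / stdNormalCDF ((τ - μ) / σ)) ^ 2) := by
  set ξ : ℝ := (τ - μ) / σ with hξ
  set Φ : ℝ := stdNormalCDF ξ with hΦdef
  set φv : ℝ := stdNormalPDF ξ with hφdef
  have hΦpos : 0 < Φ := cdf_pos ξ
  haveI : NullSingletonClass (gaussianReal 0 1) :=
    ⟨fun x => gaussianReal_absolutelyContinuous 0 one_ne_zero Real.volume_singleton⟩
  set T : ℝ → ℝ := fun z => σ * z + μ with hT
  have hTm : Measurable T := (measurable_const_mul σ).add_const μ
  have hmap : gaussianReal μ (Real.toNNReal (σ ^ 2)) = Measure.map T (gaussianReal 0 1) :=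
    (map_affine σ μ hσ).symm
  have hpreT : T ⁻¹' (Iio τ) = Iio ξ := by
    ext z
    simp only [hT, mem_preimage, mem_Iio, hξ]
    rw [lt_div_iff₀ hσ]
    constructor <;> intro h <;> nlinarith
  set A : Set Ω := {ω | X ω < τ} with hA
  have hpre : A = X ⁻¹' (Iio τ) := rfl
  have hPA : ℙ A = gaussianReal 0 1 (Iic ξ) := by
    rw [hpre, ← Measure.map_apply hX measurableSet_Iio, hlaw, hmap,
      Measure.map_apply hTm measurableSet_Iio, hpreT]
    exact measure_congr Iio_ae_eq_Iic
  have hPA' : ℙ A = ENNReal.ofReal Φ := by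
    rw [hPA, hΦdef, stdNormalCDF, ENNReal.ofReal_toReal (measure_ne_top _ _)]
  have hA0 : ℙ A ≠ 0 := by rw [hPA]; exact gaussian01_Iic_ne_zero ξ
  haveI hprob : IsProbabilityMeasure (ℙ[|A]) := cond_isProbabilityMeasure hA0
  have hmapcond : Measure.map X (ℙ[|A])
      = (ℙ A)⁻¹ • Measure.map T ((gaussianReal 0 1).restrict (Iic ξ)) := by
    rw [ProbabilityTheory.cond, Measure.map_smul]
    congr 1
    rw [hpre, ← Measure.restrict_map hX measurableSet_Iio, hlaw, hmap,
      Measure.restrict_map hTm measurableSet_Iio, hpreT]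
    exact congrArg _ (Measure.restrict_congr_set Iio_ae_eq_Iic)
  have hiT1 : Integrable (fun z => T z * stdNormalPDF z) := by
    refine (((integrable_id_pdf.const_mul σ).add (integrable_pdf.const_mul μ)).congr
      (ae_of_all _ fun z => ?_))
    simp only [hT, Pi.add_apply]; ring
  have hiT2 : Integrable (fun z => T z ^ 2 * stdNormalPDF z) := by
    refine ((((integrable_sq_pdf.const_mul (σ ^ 2)).add
      (integrable_id_pdf.const_mul (2 * σ * μ))).add
      (integrable_pdf.const_mul (μ ^ 2))).congr (ae_of_all _ fun z => ?_))
    simp only [hT, Pi.add_apply]; ring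
  have hinvne : (ℙ A)⁻¹ ≠ ⊤ := ENNReal.inv_ne_top.2 hA0
  have hint2 : Integrable (fun x => x ^ 2)
      (Measure.map T ((gaussianReal 0 1).restrict (Iic ξ))) :=
    (integrable_map_measure (measurable_id.pow_const 2).aestronglyMeasurable
      hTm.aemeasurable).2 (integrable_g01_restrict measurableSet_Iic hiT2)
  have hintc2 : Integrable (fun ω => X ω ^ 2) (ℙ[|A]) :=
    (integrable_map_measure (measurable_id.pow_const 2).aestronglyMeasurable
      hX.aemeasurable (μ := ℙ[|A])).1 (by rw [hmapcond]; exact hint2.smul_measure hinvne)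
  have hmem : MemLp X 2 (ℙ[|A]) :=
    (memLp_two_iff_integrable_sq hX.aestronglyMeasurable).2 hintc2
  have hc : ((ℙ A)⁻¹).toReal = Φ⁻¹ := by
    rw [hPA', ENNReal.toReal_inv, ENNReal.toReal_ofReal hΦpos.le]
  have hI0 : ∫ z in Iic ξ, stdNormalPDF z = Φ := (cdf_eq ξ).symm
  have hI1 : ∫ z in Iic ξ, z * stdNormalPDF z = -φv := integral_id_pdf_Iic ξ
  have hI2 : ∫ z in Iic ξ, z ^ 2 * stdNormalPDF z = Φ - ξ * φv := by
    rw [integral_sq_pdf_Iic ξ, hI0]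
  have hJ1 : ∫ z in Iic ξ, T z * stdNormalPDF z = μ * Φ - σ * φv := by
    have hsplit : (fun z => T z * stdNormalPDF z)
        = fun z => σ * (z * stdNormalPDF z) + μ * stdNormalPDF z :=
      funext fun z => by simp only [hT]; ring
    have ha : IntegrableOn (fun z : ℝ => σ * (z * stdNormalPDF z)) (Iic ξ) :=
      (integrable_id_pdf.const_mul σ).integrableOn
    have hb : IntegrableOn (fun z : ℝ => μ * stdNormalPDF z) (Iic ξ) :=
      (integrable_pdf.const_mul μ).integrableOn
    rw [hsplit, integral_add ha hb, integral_const_mul, integral_const_mul, hI1, hI0]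
    ring
  have hJ2 : ∫ z in Iic ξ, T z ^ 2 * stdNormalPDF z
      = σ ^ 2 * (Φ - ξ * φv) - 2 * σ * μ * φv + μ ^ 2 * Φ := by
    have hsplit : (fun z => T z ^ 2 * stdNormalPDF z)
        = fun z => σ ^ 2 * (z ^ 2 * stdNormalPDF z)
          + (2 * σ * μ) * (z * stdNormalPDF z) + μ ^ 2 * stdNormalPDF z :=
      funext fun z => by simp only [hT]; ring
    have ha : IntegrableOn (fun z : ℝ => σ ^ 2 * (z ^ 2 * stdNormalPDF z)) (Iic ξ) :=
      (integrable_sq_pdf.const_mul _).integrableOn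
    have hb : IntegrableOn (fun z : ℝ => 2 * σ * μ * (z * stdNormalPDF z)) (Iic ξ) :=
      (integrable_id_pdf.const_mul _).integrableOn
    have hd : IntegrableOn (fun z : ℝ => μ ^ 2 * stdNormalPDF z) (Iic ξ) :=
      (integrable_pdf.const_mul _).integrableOn
    have hab : IntegrableOn (fun z : ℝ => σ ^ 2 * (z ^ 2 * stdNormalPDF z)
        + 2 * σ * μ * (z * stdNormalPDF z)) (Iic ξ) := by exact ha.add hb
    rw [hsplit, integral_add hab hd, integral_add ha hb, integral_const_mul,
      integral_const_mul, integral_const_mul, hI2, hI1, hI0]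
    ring
  have hm1 : ∫ ω, X ω ∂(ℙ[|A]) = Φ⁻¹ * (μ * Φ - σ * φv) :=
    calc ∫ ω, X ω ∂(ℙ[|A])
        = ∫ x, x ∂(Measure.map X (ℙ[|A])) :=
          (integral_map hX.aemeasurable (by exact measurable_id.aestronglyMeasurable)).symm
      _ = ∫ x, x ∂((ℙ A)⁻¹ • Measure.map T ((gaussianReal 0 1).restrict (Iic ξ))) := by
          rw [hmapcond]
      _ = ((ℙ A)⁻¹).toReal • ∫ x, x ∂(Measure.map T ((gaussianReal 0 1).restrict (Iic ξ))) :=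
          integral_smul_measure _ _
      _ = Φ⁻¹ * ∫ z, T z ∂((gaussianReal 0 1).restrict (Iic ξ)) := by
          rw [hc, integral_map hTm.aemeasurable (by exact measurable_id.aestronglyMeasurable),
            smul_eq_mul]
      _ = Φ⁻¹ * ∫ z in Iic ξ, T z * stdNormalPDF z := by
          rw [setIntegral_g01 T measurableSet_Iic]
      _ = Φ⁻¹ * (μ * Φ - σ * φv) := by rw [hJ1]
  have hm2 : ∫ ω, X ω ^ 2 ∂(ℙ[|A])
      = Φ⁻¹ * (σ ^ 2 * (Φ - ξ * φv) - 2 * σ * μ * φv + μ ^ 2 * Φ) :=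
    calc ∫ ω, X ω ^ 2 ∂(ℙ[|A])
        = ∫ x, x ^ 2 ∂(Measure.map X (ℙ[|A])) :=
          (integral_map hX.aemeasurable
            (by exact (measurable_id.pow_const 2).aestronglyMeasurable)).symm
      _ = ∫ x, x ^ 2 ∂((ℙ A)⁻¹ • Measure.map T ((gaussianReal 0 1).restrict (Iic ξ))) := by
          rw [hmapcond]
      _ = ((ℙ A)⁻¹).toReal
            • ∫ x, x ^ 2 ∂(Measure.map T ((gaussianReal 0 1).restrict (Iic ξ))) :=
          integral_smul_measure _ _
      _ = Φ⁻¹ * ∫ z, T z ^ 2 ∂((gaussianReal 0 1).restrict (Iic ξ)) := by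
          rw [hc, integral_map hTm.aemeasurable
            (by exact (measurable_id.pow_const 2).aestronglyMeasurable), smul_eq_mul]
      _ = Φ⁻¹ * ∫ z in Iic ξ, T z ^ 2 * stdNormalPDF z := by
          rw [setIntegral_g01 (fun z => T z ^ 2) measurableSet_Iic]
      _ = Φ⁻¹ * (σ ^ 2 * (Φ - ξ * φv) - 2 * σ * μ * φv + μ ^ 2 * Φ) := by rw [hJ2]
  rw [variance_eq_sub hmem]
  simp only [Pi.pow_apply]
  rw [hm2, hm1]
  field_simp
  ring
end
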